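/- Let Q be a divisible commutative quantale and let x ≤ a ≤ b in Q. Then the element y := b ⊗ (a ⧵ x) satisfies y ≤ b and a ⊗_b y = x, where x ⊗_b y := b ⊗ (b ⧵ x) ⊗ (b ⧵ y). In other words, the interval [⊥, b] with the smooth slice multiplication is again divisible. -/

import Mathlib

/-- Residuation in a quantale: `a ⧵ b = sSup {c | a * c ≤ b}`. -/
def res {Q : Type*} [Mul Q] [CompleteLattice Q] (a b : Q) : Q := sSup {c | a * c ≤ b}

/-- The smooth slice multiplication on `[⊥, b]`: `x ⊗_b y = b * (b ⧵ x) * (b ⧵ y)`. -/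
def smul {Q : Type*} [Mul Q] [CompleteLattice Q] (b x y : Q) : Q := b * res b x * res b y

/-! Divisibility gives `a * (a ⧵ x) = x` for `x ≤ a` and makes every product `b * c` lie below `b`.
Writing `a = b * (b ⧵ a)`, the factor `b` in `a ⊗_b y` absorbs `b ⧵ y`, so that
`a ⊗_b (b * r) = a * r`; with `r = a ⧵ x` this is `x`. -/

lemma le_res_of_mul_le {Q : Type*} [Mul Q] [CompleteLattice Q] {a c x : Q} (h : a * c ≤ x) :
    c ≤ res a x :=
  le_sSup h

section Quantale

variable {Q : Type*} [CommSemigroup Q] [CompleteLattice Q] [IsQuantale Q]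

lemma mul_res_le (a x : Q) : a * res a x ≤ x := by
  rw [res, mul_sSup_distrib]
  exact iSup₂_le fun _ hc => hc

lemma mul_res_eq_of_eq_mul {a x c : Q} (h : x = a * c) : a * res a x = x :=
  le_antisymm (mul_res_le a x) <|
    calc x = a * c := h
      _ ≤ a * res a x := mul_le_mul_right (le_res_of_mul_le h.ge) a

lemma mul_le_self_of_eq_top_mul {a c : Q} (h : a = ⊤ * c) (d : Q) : a * d ≤ a :=
  calc a * d ≤ a * ⊤ := mul_le_mul_right le_top a
    _ = ⊤ * ⊤ * c := by rw [h, mul_right_comm]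
    _ ≤ ⊤ * c := mul_le_mul_left le_top c
    _ = a := h.symm

lemma mul_res_mul_eq {a b : Q} (h : b * res b a = a) (r : Q) : a * res b (b * r) = a * r := by
  refine le_antisymm ?_ (mul_le_mul_right (le_res_of_mul_le le_rfl) a)
  calc a * res b (b * r) = b * res b a * res b (b * r) := by rw [h]
    _ = res b a * (b * res b (b * r)) := by ac_rfl
    _ ≤ res b a * (b * r) := mul_le_mul_right (mul_res_le b _) _
    _ = a * r := by rw [← mul_assoc, mul_comm _ b, h]

end Quantale

/-- In a divisible commutative quantale, given `x ≤ a ≤ b`, the element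
`y = b * (a ⧵ x)` satisfies `y ≤ b` and `a ⊗_b y = x`; hence the smooth slice
`[⊥, b]` is again divisible. -/
theorem smooth_slice_divisible {Q : Type*} [CommSemigroup Q] [CompleteLattice Q] [IsQuantale Q]
    (hdiv : ∀ a b : Q, a ≤ b → ∃ c, a = b * c)
    {x a b : Q} (hxa : x ≤ a) (hab : a ≤ b) :
    b * res a x ≤ b ∧ smul b a (b * res a x) = x := by
  obtain ⟨c, hc⟩ := hdiv b ⊤ le_top
  obtain ⟨d, hd⟩ := hdiv a b hab
  obtain ⟨e, he⟩ := hdiv x a hxa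
  have hba : b * res b a = a := mul_res_eq_of_eq_mul hd
  refine ⟨mul_le_self_of_eq_top_mul hc _, ?_⟩
  rw [smul, hba, mul_res_mul_eq hba, mul_res_eq_of_eq_mul he]
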